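/- arXiv:2405.19919 — 4 statements merged into one kernel-verified Lean document; each statement's English description precedes it below -/
import Mathlib

section
/- (Theorem 1, Graph Irreducible Condition) The negative class-conditional distribution P_n is irreducible with respect to the positive class-conditional distribution P_p if and only if the essential supremum, taken with respect to the mixture measure P = π·P_p + (1−π)·P_n, of the positive class-posterior function η equals 1. -/
open MeasureTheory Filter
open scoped ENNReal NNReal

/-- **Theorem 1 (Graph Irreducible Condition).**
`Pₙ` is irreducible with respect to `Pₚ` iff the essential supremum (w.r.t. the
mixture `P = π Pₚ + (1-π) Pₙ`) of the positive class-posterior `η` equals `1`. -/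
theorem graph_irreducible_condition
    {X : Type*} [MeasurableSpace X] (μ : Measure X) [SigmaFinite μ]
    (pp pn : X → ℝ≥0) (hpp : Measurable pp) (hpn : Measurable pn)
    (hpp1 : ∫⁻ x, (pp x : ℝ≥0∞) ∂μ = 1) (hpn1 : ∫⁻ x, (pn x : ℝ≥0∞) ∂μ = 1)
    (π : ℝ≥0) (hπ0 : 0 < π) (hπ1 : π < 1)
    (Pp Pn P : Measure X)
    (hPp : Pp = μ.withDensity (fun x => (pp x : ℝ≥0∞)))
    (hPn : Pn = μ.withDensity (fun x => (pn x : ℝ≥0∞)))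
    (hP : P = π • Pp + (1 - π) • Pn)
    (η : X → ℝ)
    (hη : ∀ x, η x =
      if 0 < (π : ℝ) * (pp x : ℝ) + (1 - (π : ℝ)) * (pn x : ℝ)
      then (π : ℝ) * (pp x : ℝ) / ((π : ℝ) * (pp x : ℝ) + (1 - (π : ℝ)) * (pn x : ℝ))
      else 0) :
    (¬ ∃ (β : ℝ≥0) (Q : Measure X), IsProbabilityMeasure Q ∧
        0 < β ∧ β ≤ 1 ∧ Pn = β • Pp + (1 - β) • Q) ↔
      essSup η P = 1 := by
  subst hPp hPn
  have hppE : Measurable fun x => (pp x : ℝ≥0∞) := hpp.coe_nnreal_ennreal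
  have hpnE : Measurable fun x => (pn x : ℝ≥0∞) := hpn.coe_nnreal_ennreal
  have hπR0 : (0 : ℝ) < (π : ℝ) := hπ0
  have hπR1 : (π : ℝ) < 1 := hπ1
  have h1π : (0 : ℝ) < 1 - (π : ℝ) := by linarith
  -- the mixture density
  set w : X → ℝ≥0∞ := fun x => (π : ℝ≥0∞) * (pp x : ℝ≥0∞) + ((1 - π : ℝ≥0) : ℝ≥0∞) * (pn x : ℝ≥0∞)
    with hw_def
  have hw : Measurable w := (hppE.const_mul _).add (hpnE.const_mul _)
  have hPw : P = μ.withDensity w := by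
    rw [hP]
    ext s hs
    rw [Measure.add_apply, Measure.coe_nnreal_smul_apply, Measure.coe_nnreal_smul_apply,
      withDensity_apply _ hs, withDensity_apply _ hs, withDensity_apply _ hs,
      ← lintegral_const_mul _ hppE, ← lintegral_const_mul _ hpnE,
      ← lintegral_add_left (hppE.const_mul _)]
  -- pointwise facts about w and the real denominator
  have hwzero : ∀ x, w x = 0 → pp x = 0 ∧ pn x = 0 := by
    intro x hx
    rw [hw_def] at hx
    simp only [add_eq_zero, mul_eq_zero, ENNReal.coe_eq_zero] at hx
    constructor
    · rcases hx.1 with h | h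
      · exact absurd h hπ0.ne'
      · exact h
    · rcases hx.2 with h | h
      · exact absurd h (tsub_pos_of_lt hπ1).ne'
      · exact h
  have hdpos : ∀ x, w x ≠ 0 → 0 < (π : ℝ) * (pp x : ℝ) + (1 - (π : ℝ)) * (pn x : ℝ) := by
    intro x hx
    rcases eq_or_lt_of_le (zero_le : 0 ≤ pp x) with h1 | h1
    · rcases eq_or_lt_of_le (zero_le : 0 ≤ pn x) with h2 | h2
      · exact absurd (by simp [hw_def, ← h1, ← h2]) hx
      · have : (0:ℝ) < pn x := h2
        nlinarith [(pp x).coe_nonneg]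
    · have : (0:ℝ) < pp x := h1
      nlinarith [(pn x).coe_nonneg]
  -- basic bounds on η
  have hη01 : ∀ x, 0 ≤ η x ∧ η x ≤ 1 := by
    intro x
    rw [hη x]
    split_ifs with h
    · constructor
      · apply div_nonneg _ h.le
        positivity
      · rw [div_le_one h]
        nlinarith [(pn x).coe_nonneg]
    · norm_num
  have hPuniv : P Set.univ = 1 := by
    rw [hPw, withDensity_apply _ MeasurableSet.univ, Measure.restrict_univ, hw_def,
      lintegral_add_left (hppE.const_mul _), lintegral_const_mul _ hppE,
      lintegral_const_mul _ hpnE, hpp1, hpn1, mul_one, mul_one, ← ENNReal.coe_add,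
      add_tsub_cancel_of_le hπ1.le, ENNReal.coe_one]
  haveI : NeBot (ae P) := ae_neBot.2 (by
    intro h
    rw [h] at hPuniv
    simp at hPuniv)
  have hcob : IsCoboundedUnder (· ≤ ·) (ae P) η :=
    isCoboundedUnder_le_of_le (ae P) (x := 0) (fun i => (hη01 i).1)
  have hbdd : IsBoundedUnder (· ≤ ·) (ae P) η :=
    isBoundedUnder_of ⟨1, fun x => (hη01 x).2⟩
  have hle1 : essSup η P ≤ 1 := limsup_le_of_le hcob (Eventually.of_forall fun x => (hη01 x).2)
  -- the core condition S
  have hS_lt : (∃ β : ℝ≥0, 0 < β ∧ β ≤ 1 ∧ ∀ᵐ x ∂μ, (β : ℝ≥0∞) * (pp x : ℝ≥0∞) ≤ (pn x : ℝ≥0∞))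
      → essSup η P < 1 := by
    rintro ⟨β, hβ0, hβ1, hae⟩
    have hβR0 : (0 : ℝ) < (β : ℝ) := hβ0
    set c : ℝ := (π : ℝ) / ((π : ℝ) + (1 - (π : ℝ)) * (β : ℝ)) with hc_def
    have hden : (0 : ℝ) < (π : ℝ) + (1 - (π : ℝ)) * (β : ℝ) := by nlinarith
    have hc1 : c < 1 := by
      rw [hc_def, div_lt_one hden]
      nlinarith
    have hc0 : 0 ≤ c := div_nonneg hπR0.le hden.le
    have hb : ∀ᵐ x ∂P, η x ≤ c := by
      rw [hPw, ae_withDensity_iff hw]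
      filter_upwards [hae] with x hx hwx
      have hxr : (β : ℝ) * (pp x : ℝ) ≤ (pn x : ℝ) := by
        have : ((β * pp x : ℝ≥0) : ℝ≥0∞) ≤ ((pn x : ℝ≥0) : ℝ≥0∞) := by
          push_cast; exact hx
        exact_mod_cast this
      have hd := hdpos x hwx
      rw [hη x, if_pos hd, div_le_iff₀ hd]
      have hkey : c * ((π : ℝ) + (1 - (π : ℝ)) * (β : ℝ)) = (π : ℝ) :=
        div_mul_cancel₀ _ hden.ne'
      calc (π : ℝ) * (pp x : ℝ)
          = c * (((π : ℝ) + (1 - (π : ℝ)) * (β : ℝ)) * (pp x : ℝ)) := by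
            rw [← mul_assoc, hkey]
        _ ≤ c * ((π : ℝ) * (pp x : ℝ) + (1 - (π : ℝ)) * (pn x : ℝ)) := by
            apply mul_le_mul_of_nonneg_left _ hc0
            nlinarith [mul_le_mul_of_nonneg_left hxr h1π.le]
    exact lt_of_le_of_lt (limsup_le_of_le hcob hb) hc1
  have hlt_S : essSup η P < 1
      → (∃ β : ℝ≥0, 0 < β ∧ β ≤ 1 ∧ ∀ᵐ x ∂μ, (β : ℝ≥0∞) * (pp x : ℝ≥0∞) ≤ (pn x : ℝ≥0∞)) := by
    intro hlt
    set c : ℝ := max ((essSup η P + 1) / 2) (1/2) with hc_def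
    have hc1 : c < 1 := by
      apply max_lt _ (by norm_num)
      linarith
    have hc0 : (0:ℝ) < c := lt_of_lt_of_le (by norm_num) (le_max_right _ _)
    have hcb : ∀ᵐ x ∂P, η x ≤ c := by
      have h := ae_lt_of_essSup_lt (show essSup η P < (essSup η P + 1) / 2 by linarith) hbdd
      filter_upwards [h] with x hx
      exact hx.le.trans (le_max_left _ _)
    set K : ℝ := c * (1 - (π : ℝ)) / ((1 - c) * (π : ℝ)) with hK_def
    have hpos : (0:ℝ) < (1 - c) * (π : ℝ) := mul_pos (by linarith) hπR0
    have hK0 : 0 ≤ K := div_nonneg (by nlinarith) hpos.le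
    rw [hPw, ae_withDensity_iff hw] at hcb
    have hae : ∀ᵐ x ∂μ, (pp x : ℝ) ≤ K * (pn x : ℝ) := by
      filter_upwards [hcb] with x hx
      by_cases hwx : w x = 0
      · rcases hwzero x hwx with ⟨h1, h2⟩
        rw [h1]
        push_cast
        positivity
      · have hd := hdpos x hwx
        have hxc := hx hwx
        rw [hη x, if_pos hd, div_le_iff₀ hd] at hxc
        have h2 : (1 - c) * (π : ℝ) * (pp x : ℝ) ≤ c * (1 - (π : ℝ)) * (pn x : ℝ) := by
          nlinarith
        rw [hK_def, div_mul_eq_mul_div, le_div_iff₀ hpos]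
        nlinarith [h2]
    set M : ℝ≥0 := Real.toNNReal (max K 1) with hM_def
    have hMr : (M : ℝ) = max K 1 := Real.coe_toNNReal _ (le_max_right K 1 |>.trans' zero_le_one)
    have hM1 : (1 : ℝ) ≤ (M : ℝ) := by rw [hMr]; exact le_max_right _ _
    have hMpos : (0:ℝ) < M := lt_of_lt_of_le zero_lt_one hM1
    refine ⟨M⁻¹, ?_, ?_, ?_⟩
    · rw [pos_iff_ne_zero]
      simp only [ne_eq, inv_eq_zero]
      intro h
      rw [h] at hMpos
      simp at hMpos
    · exact inv_le_one_of_one_le₀ (by exact_mod_cast hM1)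
    · filter_upwards [hae] with x hx
      have hr : ((M⁻¹ : ℝ≥0) : ℝ) * (pp x : ℝ) ≤ (pn x : ℝ) := by
        push_cast
        rw [inv_mul_le_iff₀ hMpos]
        calc (pp x : ℝ) ≤ K * (pn x : ℝ) := hx
          _ ≤ (M : ℝ) * (pn x : ℝ) := by
              apply mul_le_mul_of_nonneg_right _ (pn x).coe_nonneg
              rw [hMr]; exact le_max_left _ _
      have hnn : M⁻¹ * pp x ≤ pn x := by
        rw [← NNReal.coe_le_coe]; push_cast; exact_mod_cast hr
      exact_mod_cast ENNReal.coe_le_coe.2 hnn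
  constructor
  · intro hnred
    by_contra hne
    have hlt : essSup η P < 1 := lt_of_le_of_ne hle1 hne
    obtain ⟨β, hβ0, hβ1, hae⟩ := hlt_S hlt
    apply hnred
    rcases eq_or_lt_of_le hβ1 with hβeq | hβlt
    · -- β = 1 : Pn = Pp
      have hle : (fun x => (pp x : ℝ≥0∞)) ≤ᵐ[μ] fun x => (pn x : ℝ≥0∞) := by
        filter_upwards [hae] with x hx
        rw [hβeq, ENNReal.coe_one, one_mul] at hx
        exact hx
      have heq : (fun x => (pp x : ℝ≥0∞)) =ᵐ[μ] fun x => (pn x : ℝ≥0∞) :=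
        ae_eq_of_ae_le_of_lintegral_le hle (by rw [hpp1]; exact ENNReal.one_ne_top)
          hpnE.aemeasurable (by rw [hpp1, hpn1])
      refine ⟨1, μ.withDensity (fun x => (pp x : ℝ≥0∞)),
        ⟨by rw [withDensity_apply _ MeasurableSet.univ, Measure.restrict_univ, hpp1]⟩,
        one_pos, le_rfl, ?_⟩
      simp only [tsub_self, one_smul, zero_smul, add_zero]
      exact (withDensity_congr_ae heq).symm
    · -- β < 1
      set g : X → ℝ≥0∞ := fun x => (pn x : ℝ≥0∞) - (β : ℝ≥0∞) * (pp x : ℝ≥0∞) with hg_def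
      have hg : Measurable g := hpnE.sub (hppE.const_mul _)
      have hb1 : ((1 - β : ℝ≥0) : ℝ≥0∞) ≠ 0 := by
        simp only [ne_eq, ENNReal.coe_eq_zero]
        exact (tsub_pos_of_lt hβlt).ne'
      have hβint : ∫⁻ x, (β : ℝ≥0∞) * (pp x : ℝ≥0∞) ∂μ = (β : ℝ≥0∞) := by
        rw [lintegral_const_mul _ hppE, hpp1, mul_one]
      have hgint : ∫⁻ x, g x ∂μ = ((1 - β : ℝ≥0) : ℝ≥0∞) := by
        rw [hg_def]
        rw [lintegral_sub (hppE.const_mul _) (by rw [hβint]; exact ENNReal.coe_ne_top) hae,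
          hpn1, hβint, ENNReal.coe_sub, ENNReal.coe_one]
      refine ⟨β, μ.withDensity (fun x => ((1 - β : ℝ≥0) : ℝ≥0∞)⁻¹ * g x),
        ⟨by rw [withDensity_apply _ MeasurableSet.univ, Measure.restrict_univ,
          lintegral_const_mul _ hg, hgint, ENNReal.inv_mul_cancel hb1 ENNReal.coe_ne_top]⟩,
        hβ0, hβ1, ?_⟩
      ext s hs
      rw [Measure.add_apply, Measure.coe_nnreal_smul_apply, Measure.coe_nnreal_smul_apply,
        withDensity_apply _ hs, withDensity_apply _ hs, withDensity_apply _ hs,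
        lintegral_const_mul _ hg, ← mul_assoc,
        ENNReal.mul_inv_cancel hb1 ENNReal.coe_ne_top, one_mul,
        ← lintegral_const_mul _ hppE,
        ← lintegral_add_left (hppE.const_mul _)]
      apply lintegral_congr_ae
      apply ae_restrict_of_ae
      filter_upwards [hae] with x hx
      rw [hg_def]
      exact (add_tsub_cancel_of_le hx).symm
  · intro h1 hred
    obtain ⟨β, Q, hQ, hβ0, hβ1, hdec⟩ := hred
    have hae : ∀ᵐ x ∂μ, (β : ℝ≥0∞) * (pp x : ℝ≥0∞) ≤ (pn x : ℝ≥0∞) := by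
      apply ae_le_of_forall_setLIntegral_le_of_sigmaFinite (hppE.const_mul _)
      intro s hs _
      calc ∫⁻ x in s, (β : ℝ≥0∞) * (pp x : ℝ≥0∞) ∂μ
          = (β : ℝ≥0∞) * μ.withDensity (fun x => (pp x : ℝ≥0∞)) s := by
            rw [lintegral_const_mul _ hppE, withDensity_apply _ hs]
        _ ≤ μ.withDensity (fun x => (pn x : ℝ≥0∞)) s := by
            rw [hdec, Measure.add_apply, Measure.coe_nnreal_smul_apply]
            exact le_add_right le_rfl
        _ = ∫⁻ x in s, (pn x : ℝ≥0∞) ∂μ := withDensity_apply _ hs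
    exact absurd h1 (hS_lt ⟨β, hβ0, hβ1, hae⟩).ne
end

section
/- (Lemma A.1) The negative class-conditional distribution P_n is irreducible with respect to the positive class-conditional distribution P_p if and only if the essential infimum, taken with respect to P_p, of the likelihood ratio x ↦ p_n(x)/p_p(x) (defined on the set {p_p > 0}, which carries full P_p-measure) equals 0. -/
open MeasureTheory
open scoped ENNReal NNReal

set_option maxHeartbeats 1000000 in
/-- **Lemma A.1.** `Pₙ` is irreducible with respect to `Pₚ` iff the essential infimum
(w.r.t. `Pₚ`) of the likelihood ratio `x ↦ pₙ(x)/pₚ(x)` equals `0`. -/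
theorem irreducible_iff_essInf_ratio_eq_zero
    {X : Type*} [MeasurableSpace X] (μ : Measure X) [SigmaFinite μ]
    (pp pn : X → ℝ≥0) (hpp : Measurable pp) (hpn : Measurable pn)
    (hpp1 : ∫⁻ x, (pp x : ℝ≥0∞) ∂μ = 1) (hpn1 : ∫⁻ x, (pn x : ℝ≥0∞) ∂μ = 1)
    (Pp Pn : Measure X)
    (hPp : Pp = μ.withDensity (fun x => (pp x : ℝ≥0∞)))
    (hPn : Pn = μ.withDensity (fun x => (pn x : ℝ≥0∞))) :
    (¬ ∃ (β : ℝ≥0) (Q : Measure X), IsProbabilityMeasure Q ∧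
        0 < β ∧ β ≤ 1 ∧ Pn = β • Pp + (1 - β) • Q) ↔
      essInf (fun x => (pn x : ℝ) / (pp x : ℝ)) Pp = 0 := by
  subst hPp hPn
  set pp' : X → ℝ≥0∞ := fun x => (pp x : ℝ≥0∞) with hpp'
  set pn' : X → ℝ≥0∞ := fun x => (pn x : ℝ≥0∞) with hpn'
  have hpp'm : Measurable pp' := hpp.coe_nnreal_ennreal
  have hpn'm : Measurable pn' := hpn.coe_nnreal_ennreal
  set f : X → ℝ := fun x => (pn x : ℝ) / (pp x : ℝ) with hfdef
  have hfnonneg : ∀ x, 0 ≤ f x := fun x => div_nonneg (pn x).coe_nonneg (pp x).coe_nonneg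
  have hPpprob : IsProbabilityMeasure (μ.withDensity pp') := by
    constructor
    rw [withDensity_apply _ MeasurableSet.univ, Measure.restrict_univ]
    exact hpp1
  have hne : (ae (μ.withDensity pp')).NeBot := by
    rw [ae_neBot]
    intro h
    have := measure_univ (μ := μ.withDensity pp')
    rw [h] at this
    simp at this
  have hcob : Filter.IsCoboundedUnder (· ≥ ·) (ae (μ.withDensity pp')) f := by
    have hfreq : ∃ n : ℕ, ∃ᶠ x in ae (μ.withDensity pp'), f x ≤ n := by
      by_contra hcon
      push_neg at hcon
      have : ∀ᵐ x ∂(μ.withDensity pp'), ∀ n : ℕ, (n : ℝ) < f x :=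
        (ae_all_iff).mpr hcon
      obtain ⟨x, hx⟩ := this.exists
      obtain ⟨n, hn⟩ := exists_nat_gt (f x)
      exact absurd (hx n) (not_lt.mpr hn.le)
    obtain ⟨n, hn⟩ := hfreq
    exact Filter.IsCoboundedUnder.of_frequently_le (a := (n : ℝ)) (by exact hn)
  have hf0 : 0 ≤ essInf f (μ.withDensity pp') :=
    Filter.le_liminf_of_le hcob (Filter.Eventually.of_forall hfnonneg)
  -- key: β • Pp ≤ Pn implies β * pp ≤ pn a.e. and β ≤ essInf
  constructor
  · -- irreducible → essInf = 0
    intro hirr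
    by_contra h0
    have hc : 0 < essInf f (μ.withDensity pp') := lt_of_le_of_ne hf0 (Ne.symm h0)
    have hbdd : Filter.IsBoundedUnder (· ≥ ·) (ae (μ.withDensity pp')) f :=
      ⟨0, Filter.eventually_map.mpr (Filter.Eventually.of_forall hfnonneg)⟩
    have hae : ∀ᵐ x ∂(μ.withDensity pp'), essInf f (μ.withDensity pp') ≤ f x :=
      ae_essInf_le hbdd
    set c : ℝ := essInf f (μ.withDensity pp') with hcdef
    set β : ℝ≥0 := min c.toNNReal 1 with hβdef
    have hβpos : 0 < β := lt_min (Real.toNNReal_pos.mpr hc) one_pos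
    have hβle1 : β ≤ 1 := min_le_right _ _
    have hβlec : (β : ℝ) ≤ c := le_trans (by exact_mod_cast min_le_left c.toNNReal 1)
      (le_of_eq (Real.coe_toNNReal c hc.le))
    -- translate to μ-a.e.
    have hkey : ∀ᵐ x ∂μ, (β : ℝ≥0∞) * pp' x ≤ pn' x := by
      rw [ae_withDensity_iff hpp'm] at hae
      filter_upwards [hae] with x hx
      rcases eq_or_ne (pp x) 0 with h | h
      · simp [hpp', h]
      · have hppx : (0 : ℝ) < pp x := lt_of_le_of_ne (pp x).coe_nonneg
          (by exact_mod_cast h.symm)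
        have hx' : c ≤ f x := hx (by simpa [hpp'] using h)
        have : (β : ℝ) * (pp x : ℝ) ≤ (pn x : ℝ) := by
          have := (le_div_iff₀ hppx).mp (le_trans hβlec hx')
          linarith
        have hnn : β * pp x ≤ pn x := by exact_mod_cast this
        simpa [hpp', hpn', ← ENNReal.coe_mul] using (ENNReal.coe_le_coe.mpr hnn)
    have hβint : ∫⁻ x, (β : ℝ≥0∞) * pp' x ∂μ = (β : ℝ≥0∞) := by
      rw [lintegral_const_mul _ hpp'm, hpp1, mul_one]
    rcases eq_or_lt_of_le hβle1 with hβ1 | hβlt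
    · -- β = 1 : pn = pp a.e., Pn = Pp
      have h1 : pp' ≤ᵐ[μ] pn' := by
        filter_upwards [hkey] with x hx
        simpa [hβ1] using hx
      have heq : pp' =ᵐ[μ] pn' :=
        ae_eq_of_ae_le_of_lintegral_le h1 (by rw [hpp1]; exact ENNReal.one_ne_top)
          hpn'm.aemeasurable (by rw [hpn1, hpp1])
      exact hirr ⟨1, μ.withDensity pp', hPpprob, one_pos, le_refl 1, by
        simp [withDensity_congr_ae heq.symm]⟩
    · -- β < 1
      set γ : ℝ≥0 := 1 - β with hγdef
      have hγpos : 0 < γ := tsub_pos_of_lt hβlt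
      have hγne : (γ : ℝ≥0∞) ≠ 0 := by exact_mod_cast hγpos.ne'
      have hγnetop : (γ : ℝ≥0∞) ≠ ∞ := ENNReal.coe_ne_top
      set q : X → ℝ≥0∞ := fun x => (γ : ℝ≥0∞)⁻¹ * (pn' x - (β : ℝ≥0∞) * pp' x) with hqdef
      have hqm : Measurable q := (measurable_const.mul ((hpn'm).sub (hpp'm.const_mul _)))
      have hsubint : ∫⁻ x, (pn' x - (β : ℝ≥0∞) * pp' x) ∂μ = (γ : ℝ≥0∞) := by
        rw [lintegral_sub (hpp'm.const_mul _) (by rw [hβint]; exact ENNReal.coe_ne_top) hkey,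
          hpn1, hβint, hγdef, ENNReal.coe_sub, ENNReal.coe_one]
      have hqint : ∫⁻ x, q x ∂μ = 1 := by
        rw [hqdef]
        simp only []
        rw [lintegral_const_mul _ (f := fun x => pn' x - (β : ℝ≥0∞) * pp' x) ((hpn'm).sub (hpp'm.const_mul _)), hsubint,
          ENNReal.inv_mul_cancel hγne hγnetop]
      have hQprob : IsProbabilityMeasure (μ.withDensity q) := by
        constructor
        rw [withDensity_apply _ MeasurableSet.univ, Measure.restrict_univ]
        exact hqint
      refine hirr ⟨β, μ.withDensity q, hQprob, hβpos, hβle1, ?_⟩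
      have h1 : (β : ℝ≥0) • μ.withDensity pp' = μ.withDensity (fun x => (β : ℝ≥0∞) * pp' x) := by
        rw [ENNReal.smul_def, ← withDensity_smul _ hpp'm]
        rfl
      have h2 : γ • μ.withDensity q = μ.withDensity (fun x => (γ : ℝ≥0∞) * q x) := by
        rw [ENNReal.smul_def, ← withDensity_smul _ hqm]
        rfl
      rw [h1, h2, ← withDensity_add_right _ (hqm.const_mul _)]
      apply withDensity_congr_ae
      filter_upwards [hkey] with x hx
      simp only [Pi.add_apply]
      rw [← mul_assoc, ENNReal.mul_inv_cancel hγne hγnetop, one_mul,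
        add_tsub_cancel_of_le hx]
  · -- essInf = 0 → irreducible
    rintro h0 ⟨β, Q, hQ, hβ0, hβ1, hdec⟩
    -- β • Pp ≤ Pn
    have hle : ∀ s : Set X, MeasurableSet s → μ s < ∞ →
        ∫⁻ x in s, (β : ℝ≥0∞) * pp' x ∂μ ≤ ∫⁻ x in s, pn' x ∂μ := by
      intro s hs _
      have := congrArg (fun ν : Measure X => ν s) hdec
      simp only [Measure.add_apply, Measure.smul_apply, smul_eq_mul] at this
      rw [withDensity_apply _ hs] at this
      calc ∫⁻ x in s, (β : ℝ≥0∞) * pp' x ∂μ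
          = (β : ℝ≥0∞) * ∫⁻ x in s, pp' x ∂μ := lintegral_const_mul _ hpp'm
        _ = (β : ℝ≥0∞) * (μ.withDensity pp') s := by rw [withDensity_apply _ hs]
        _ ≤ β • (μ.withDensity pp') s + (1 - β) • Q s := le_add_of_nonneg_right zero_le
        _ = ∫⁻ x in s, pn' x ∂μ := by rw [← this]
    have hkey : ∀ᵐ x ∂μ, (β : ℝ≥0∞) * pp' x ≤ pn' x :=
      ae_le_of_forall_setLIntegral_le_of_sigmaFinite (hpp'm.const_mul _) hle
    have haePp : ∀ᵐ x ∂(μ.withDensity pp'), (β : ℝ) ≤ f x := by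
      rw [ae_withDensity_iff hpp'm]
      filter_upwards [hkey] with x hx hppne
      have hppne' : pp x ≠ 0 := by simpa [hpp'] using hppne
      have hppx : (0 : ℝ) < pp x := lt_of_le_of_ne (pp x).coe_nonneg
        (by exact_mod_cast hppne'.symm)
      have hnn : β * pp x ≤ pn x := by
        have := hx
        rw [hpp', hpn', ← ENNReal.coe_mul, ENNReal.coe_le_coe] at this
        exact this
      have : (β : ℝ) * (pp x : ℝ) ≤ (pn x : ℝ) := by exact_mod_cast hnn
      rw [hfdef]
      exact (le_div_iff₀ hppx).mpr this
    have : (β : ℝ) ≤ essInf f (μ.withDensity pp') := Filter.le_liminf_of_le hcob haePp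
    rw [h0] at this
    exact absurd (le_antisymm this (by exact_mod_cast hβ0.le)) (by
      simpa using (by exact_mod_cast hβ0.ne' : (β : ℝ) ≠ 0))
end

section
/- (Proposition, latent label model with CPE) The essential supremum, with respect to the mixture measure P = π·P_p + (1−π)·P_n, of the positive class-posterior η equals π / (π + (1−π)·r), where r is the essential infimum, with respect to P_p, of the likelihood ratio x ↦ p_n(x)/p_p(x) on {p_p > 0}; in particular r ≤ 1, so the denominator is positive. -/
open MeasureTheory Filter
open scoped ENNReal NNReal

/-- **Proposition (latent label model with CPE).**
The essential supremum (w.r.t. the mixture `P`) of the positive class-posterior `η`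
equals `π / (π + (1-π)·r)`, where `r` is the essential infimum (w.r.t. `Pₚ`) of the
likelihood ratio `pₙ/pₚ`; in particular `r ≤ 1`, so the denominator is positive. -/
theorem essSup_posterior_eq
    {X : Type*} [MeasurableSpace X] (μ : Measure X) [SigmaFinite μ]
    (pp pn : X → ℝ≥0) (hpp : Measurable pp) (hpn : Measurable pn)
    (hpp1 : ∫⁻ x, (pp x : ℝ≥0∞) ∂μ = 1) (hpn1 : ∫⁻ x, (pn x : ℝ≥0∞) ∂μ = 1)
    (π : ℝ≥0) (hπ0 : 0 < π) (hπ1 : π < 1)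
    (Pp Pn P : Measure X)
    (hPp : Pp = μ.withDensity (fun x => (pp x : ℝ≥0∞)))
    (hPn : Pn = μ.withDensity (fun x => (pn x : ℝ≥0∞)))
    (hP : P = π • Pp + (1 - π) • Pn)
    (η : X → ℝ)
    (hη : ∀ x, η x =
      if 0 < (π : ℝ) * (pp x : ℝ) + (1 - (π : ℝ)) * (pn x : ℝ)
      then (π : ℝ) * (pp x : ℝ) / ((π : ℝ) * (pp x : ℝ) + (1 - (π : ℝ)) * (pn x : ℝ))
      else 0)
    (r : ℝ) (hr : r = essInf (fun x => (pn x : ℝ) / (pp x : ℝ)) Pp) :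
    r ≤ 1 ∧ essSup η P = (π : ℝ) / ((π : ℝ) + (1 - (π : ℝ)) * r) := by
  have hπ0' : (0:ℝ) < (π:ℝ) := hπ0
  have hπ1' : (π:ℝ) < 1 := hπ1
  have hπr : (0:ℝ) < 1 - (π:ℝ) := by linarith
  set f : X → ℝ := fun x => (pn x : ℝ) / (pp x : ℝ) with hf
  set S : Set ℝ := {a | ∀ᵐ x ∂Pp, a ≤ f x} with hS
  have hppE : Measurable fun x => ((pp x : ℝ≥0∞)) := hpp.coe_nnreal_ennreal
  have hpnE : Measurable fun x => ((pn x : ℝ≥0∞)) := hpn.coe_nnreal_ennreal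
  -- r is the sSup of S
  have hrS : r = sSup S := by
    rw [hr]; exact Filter.liminf_eq
  -- 0 ∈ S
  have h0S : (0:ℝ) ∈ S := by
    show ∀ᵐ x ∂Pp, (0:ℝ) ≤ f x
    filter_upwards with x
    positivity
  -- every element of S is ≤ 1
  have hS1 : ∀ a ∈ S, a ≤ 1 := by
    intro a ha
    rcases le_or_gt a 0 with h | h
    · linarith
    · by_contra hc
      push_neg at hc
      have ha' : ∀ᵐ x ∂μ, (pp x : ℝ≥0∞) ≠ 0 → a ≤ f x := by
        have ha2 : ∀ᵐ x ∂Pp, a ≤ f x := ha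
        rw [hPp] at ha2
        exact (ae_withDensity_iff hppE).mp ha2
      have key : ∀ᵐ x ∂μ, (a.toNNReal : ℝ≥0∞) * (pp x : ℝ≥0∞) ≤ (pn x : ℝ≥0∞) := by
        filter_upwards [ha'] with x hx
        rcases eq_or_ne (pp x) 0 with h0 | h0
        · simp [h0]
        · have hpos : (0:ℝ) < (pp x : ℝ) := by
            exact_mod_cast pos_iff_ne_zero.mpr h0
          have := hx (by exact_mod_cast (ENNReal.coe_ne_zero.mpr h0))
          have hle : a * (pp x : ℝ) ≤ (pn x : ℝ) := by
            rw [hf] at this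
            calc a * (pp x : ℝ) ≤ ((pn x : ℝ) / (pp x : ℝ)) * (pp x : ℝ) := by
                  exact mul_le_mul_of_nonneg_right this hpos.le
            _ = (pn x : ℝ) := by field_simp
          rw [← ENNReal.coe_mul, ENNReal.coe_le_coe, ← NNReal.coe_le_coe]
          calc ((a.toNNReal * pp x : ℝ≥0) : ℝ) = a * (pp x : ℝ) := by
                push_cast [Real.coe_toNNReal a h.le]; ring
          _ ≤ (pn x : ℝ) := hle
      have : (a.toNNReal : ℝ≥0∞) * 1 ≤ 1 := by
        calc (a.toNNReal : ℝ≥0∞) * 1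
            = ∫⁻ x, (a.toNNReal : ℝ≥0∞) * (pp x : ℝ≥0∞) ∂μ := by
              rw [lintegral_const_mul _ hppE, hpp1]
        _ ≤ ∫⁻ x, (pn x : ℝ≥0∞) ∂μ := lintegral_mono_ae key
        _ = 1 := hpn1
      rw [mul_one] at this
      have : a.toNNReal ≤ 1 := by exact_mod_cast this
      have : a ≤ 1 := by
        have := NNReal.coe_le_coe.mpr this
        rwa [Real.coe_toNNReal a h.le] at this
      linarith
  have hSbdd : BddAbove S := ⟨1, hS1⟩
  have hSne : S.Nonempty := ⟨0, h0S⟩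
  have hr1 : r ≤ 1 := by rw [hrS]; exact csSup_le hSne hS1
  have hr0 : 0 ≤ r := by rw [hrS]; exact le_csSup hSbdd h0S
  -- r itself is an a.e. lower bound
  have hrmem : ∀ᵐ x ∂Pp, r ≤ f x := by
    have hn : ∀ n : ℕ, ∀ᵐ x ∂Pp, r - 1/(n+1) ≤ f x := by
      intro n
      have hlt : r - 1/(n+1) < sSup S := by
        rw [← hrS]
        have : (0:ℝ) < 1/(n+1) := by positivity
        linarith
      obtain ⟨s, hsS, hs⟩ := exists_lt_of_lt_csSup hSne hlt
      filter_upwards [hsS] with x hx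
      linarith
    have := (ae_all_iff).mpr hn
    filter_upwards [this] with x hx
    by_contra hc
    push_neg at hc
    obtain ⟨n, hn⟩ := exists_nat_one_div_lt (by linarith : (0:ℝ) < r - f x)
    have := hx n
    linarith
  have hd : (0:ℝ) < (π:ℝ) + (1 - (π:ℝ)) * r := by positivity
  set M : ℝ := (π:ℝ) / ((π:ℝ) + (1 - (π:ℝ)) * r) with hM
  have hM0 : 0 < M := by positivity
  -- pointwise bound given the likelihood-ratio condition
  have hpt : ∀ x, ((pp x : ℝ≥0∞) ≠ 0 → r ≤ f x) → η x ≤ M := by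
    intro x hx
    rcases eq_or_ne (pp x) 0 with h0 | h0
    · have : η x = 0 := by
        rw [hη x, h0]
        push_cast
        simp
      rw [this]; exact hM0.le
    · have hppx : (0:ℝ) < (pp x : ℝ) := by exact_mod_cast pos_iff_ne_zero.mpr h0
      have hfx : r ≤ (pn x : ℝ) / (pp x : ℝ) := hx (by exact_mod_cast ENNReal.coe_ne_zero.mpr h0)
      have hpn0 : (0:ℝ) ≤ (pn x : ℝ) := (pn x).coe_nonneg
      have hD : (0:ℝ) < (π:ℝ) * (pp x : ℝ) + (1 - (π:ℝ)) * (pn x : ℝ) := by positivity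
      rw [hη x, if_pos hD, hM, div_le_div_iff₀ hD hd]
      have hrp : r * (pp x : ℝ) ≤ (pn x : ℝ) := by
        rw [le_div_iff₀ hppx] at hfx; linarith
      nlinarith [mul_le_mul_of_nonneg_left hrp (by positivity : (0:ℝ) ≤ (π:ℝ)*(1-(π:ℝ)))]
  -- absolute continuity facts
  have hPpμ : Pp ≪ μ := hPp ▸ withDensity_absolutelyContinuous μ _
  have hPnμ : Pn ≪ μ := hPn ▸ withDensity_absolutelyContinuous μ _
  have hPμ : P ≪ μ := by
    rw [hP]
    exact Measure.AbsolutelyContinuous.add_left_iff.mpr ⟨hPpμ.smul_left π, hPnμ.smul_left (1-π)⟩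
  have hPpP : Pp ≪ P := by
    refine Measure.AbsolutelyContinuous.mk (fun s hs h0 => ?_)
    rw [hP] at h0
    simp only [Measure.add_apply, Measure.smul_apply, smul_eq_mul] at h0
    have := (add_eq_zero.mp h0).1
    have hπne : (π : ℝ≥0∞) ≠ 0 := by exact_mod_cast hπ0.ne'
    exact (mul_eq_zero.mp this).resolve_left hπne
  -- the μ-a.e. likelihood ratio condition
  have hμae : ∀ᵐ x ∂μ, (pp x : ℝ≥0∞) ≠ 0 → r ≤ f x := by
    rw [hPp] at hrmem
    exact (ae_withDensity_iff hppE).mp hrmem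
  -- M is an a.e. upper bound for η w.r.t. P
  have hMT : ∀ᵐ x ∂P, η x ≤ M := by
    filter_upwards [hPμ.ae_le hμae] with x hx using hpt x hx
  -- Pp is nonzero
  have hPpuniv : Pp Set.univ = 1 := by
    rw [hPp, withDensity_apply _ MeasurableSet.univ, setLIntegral_univ, hpp1]
  have hPpne : Pp ≠ 0 := by
    intro h; rw [h] at hPpuniv; simp at hPpuniv
  have : NeZero Pp := ⟨hPpne⟩
  have hppPos : ∀ᵐ x ∂Pp, (pp x : ℝ≥0∞) ≠ 0 := by
    rw [hPp, ae_withDensity_iff hppE]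
    filter_upwards with x hx using hx
  -- every a.e. upper bound for η w.r.t. P is ≥ M
  have hlb : ∀ b, (∀ᵐ x ∂P, η x ≤ b) → M ≤ b := by
    intro b hb
    have hb' : ∀ᵐ x ∂Pp, η x ≤ b := hPpP.ae_le hb
    have hcomb : ∀ᵐ x ∂Pp, (0:ℝ) < (pp x : ℝ) ∧ r ≤ f x ∧ η x ≤ b := by
      filter_upwards [hppPos, hrmem, hb'] with x h1 h2 h3
      refine ⟨?_, h2, h3⟩
      have : pp x ≠ 0 := by exact_mod_cast ENNReal.coe_ne_zero.mp h1
      exact_mod_cast pos_iff_ne_zero.mpr this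
    -- get b > 0
    have hbe : ∃ x, (0:ℝ) < (pp x : ℝ) ∧ r ≤ f x ∧ η x ≤ b := by
      haveI : (ae Pp).NeBot := ae_neBot.mpr hPpne
      exact hcomb.exists
    obtain ⟨x₀, hx1, _, hx3⟩ := hbe
    have hD₀ : (0:ℝ) < (π:ℝ) * (pp x₀ : ℝ) + (1 - (π:ℝ)) * (pn x₀ : ℝ) := by positivity
    have hηx₀ : 0 < η x₀ := by
      rw [hη x₀, if_pos hD₀]; exact div_pos (mul_pos hπ0' hx1) hD₀
    have hb0 : 0 < b := lt_of_lt_of_le hηx₀ hx3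
    -- a := (π/b - π)/(1-π) is an a.e. lower bound for f
    set a : ℝ := ((π:ℝ)/b - (π:ℝ)) / (1 - (π:ℝ)) with ha
    have haS : a ∈ S := by
      show ∀ᵐ x ∂Pp, a ≤ f x
      filter_upwards [hcomb] with x ⟨h1, _, h3⟩
      have hD : (0:ℝ) < (π:ℝ) * (pp x : ℝ) + (1 - (π:ℝ)) * (pn x : ℝ) := by positivity
      rw [hη x, if_pos hD, div_le_iff₀ hD] at h3
      show a ≤ (pn x : ℝ) / (pp x : ℝ)
      rw [ha, div_le_div_iff₀ hπr h1, sub_mul, sub_le_iff_le_add, div_mul_eq_mul_div,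
        div_le_iff₀ hb0]
      nlinarith
    have har : a ≤ r := by rw [hrS]; exact le_csSup hSbdd haS
    rw [ha, div_le_iff₀ hπr, div_sub' hb0.ne', div_le_iff₀ hb0] at har
    rw [hM, div_le_iff₀ hd]
    nlinarith
  constructor
  · exact hr1
  · have heq : essSup η P = sInf {b | ∀ᵐ x ∂P, η x ≤ b} := Filter.limsup_eq
    rw [heq]
    exact le_antisymm (csInf_le ⟨M, fun b hb => hlb b hb⟩ hMT) (le_csInf ⟨M, hMT⟩ hlb)
end

section
/- (Theorem 4, aggregation shrinks the embedding distance) For every matrix of node embeddings X ∈ ℝ^{n×d}, one aggregation step H = W·X (i.e., H_i = Σ_j W_{ij} X_j) satisfies D(H) ≤ D(X), where D(X) = (1/4)·Σ_{i,j} W_{ij} ‖X_i − X_j‖₂² = (1/2)·trace(Xᵀ L X). Equivalently, for every x ∈ ℝⁿ, (W x)ᵀ L (W x) ≤ xᵀ L x. -/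
/-!
For symmetric `W` and `L = 1 - W` one has `L - W L W = (1 - W²)(1 - W) = L (1 + W) L`. Double
stochasticity gives `xᵀ (1 ± W) x = ½ ∑ᵢⱼ Wᵢⱼ (xᵢ ± xⱼ)²`: the minus sign identifies `D` with
`½ tr (Xᵀ L X)`, the plus sign shows `1 + W ≥ 0`. Hence `W L W ≤ L` in the Loewner order, and
both inequalities are the quadratic form at `x`, resp. the trace of `Xᵀ (·) X`, of this one.
-/

open Matrix
open scoped MatrixOrder

namespace Matrix

variable {ι κ R : Type*} [Fintype ι]

section CommRing

variable [CommRing R]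

lemma dotProduct_mulVec_eq_sum_sum (A : Matrix ι ι R) (x y : ι → R) :
    x ⬝ᵥ A *ᵥ y = ∑ i, ∑ j, A i j * (x i * y j) := by
  simp only [dotProduct, mulVec, Finset.mul_sum]
  exact Finset.sum_congr rfl fun i _ => Finset.sum_congr rfl fun j _ => by ring

lemma trace_transpose_mul_mul [Fintype κ] (X : Matrix ι κ R) (A : Matrix ι ι R) :
    (Xᵀ * A * X).trace = ∑ k, Xᵀ k ⬝ᵥ A *ᵥ Xᵀ k := by
  simp only [trace, diag, mul_apply, dotProduct, mulVec, transpose_apply, Finset.sum_mul,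
    Finset.mul_sum]
  exact Finset.sum_congr rfl fun k _ => by rw [Finset.sum_comm]; simp only [mul_assoc]

lemma dotProduct_transpose_mul_mul_mulVec (A B : Matrix ι ι R) (x : ι → R) :
    x ⬝ᵥ (Bᵀ * A * B) *ᵥ x = B *ᵥ x ⬝ᵥ A *ᵥ (B *ᵥ x) := by
  rw [← mulVec_mulVec, ← mulVec_mulVec, dotProduct_mulVec, vecMul_transpose]

variable [DecidableEq ι] [PartialOrder R] [IsOrderedRing R] {W : Matrix ι ι R}

lemma mem_doublyStochastic_of_isSymm (hsymm : W.IsSymm) (hnonneg : ∀ i j, 0 ≤ W i j)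
    (hrow : ∀ i, ∑ j, W i j = 1) : W ∈ doublyStochastic R ι :=
  mem_doublyStochastic_iff_sum.2 ⟨hnonneg, hrow, fun j => by simpa [hsymm.apply] using hrow j⟩

lemma sum_sum_mul_sq_add_sq (hW : W ∈ doublyStochastic R ι) (x : ι → R) :
    ∑ i, ∑ j, W i j * (x i ^ 2 + x j ^ 2) = 2 * (x ⬝ᵥ x) := by
  simp only [mul_add, Finset.sum_add_distrib, ← Finset.sum_mul,
    sum_row_of_mem_doublyStochastic hW]
  rw [Finset.sum_comm]
  simp only [← Finset.sum_mul, sum_col_of_mem_doublyStochastic hW, dotProduct]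
  simp [sq, two_mul]

lemma sum_sum_mul_sub_sq (hW : W ∈ doublyStochastic R ι) (x : ι → R) :
    ∑ i, ∑ j, W i j * (x i - x j) ^ 2 = 2 * (x ⬝ᵥ (1 - W) *ᵥ x) := by
  have hsplit : ∀ i j, W i j * (x i - x j) ^ 2
      = W i j * (x i ^ 2 + x j ^ 2) - 2 * (W i j * (x i * x j)) := fun i j => by ring
  simp only [hsplit, Finset.sum_sub_distrib, ← Finset.mul_sum]
  rw [sum_sum_mul_sq_add_sq hW, sub_mulVec, one_mulVec, dotProduct_sub,
    dotProduct_mulVec_eq_sum_sum, mul_sub]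

lemma sum_sum_mul_add_sq (hW : W ∈ doublyStochastic R ι) (x : ι → R) :
    ∑ i, ∑ j, W i j * (x i + x j) ^ 2 = 2 * (x ⬝ᵥ (1 + W) *ᵥ x) := by
  have hsplit : ∀ i j, W i j * (x i + x j) ^ 2
      = W i j * (x i ^ 2 + x j ^ 2) + 2 * (W i j * (x i * x j)) := fun i j => by ring
  simp only [hsplit, Finset.sum_add_distrib, ← Finset.mul_sum]
  rw [sum_sum_mul_sq_add_sq hW, add_mulVec, one_mulVec, dotProduct_add,
    dotProduct_mulVec_eq_sum_sum, mul_add]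

lemma sum_sum_mul_sum_sub_sq [Fintype κ] (hW : W ∈ doublyStochastic R ι) (X : Matrix ι κ R) :
    ∑ i, ∑ j, W i j * ∑ k, (X i k - X j k) ^ 2 = 2 * (Xᵀ * (1 - W) * X).trace := by
  simp only [trace_transpose_mul_mul, Finset.mul_sum, ← sum_sum_mul_sub_sq hW, transpose_apply]
  exact (Finset.sum_congr rfl fun i _ => Finset.sum_comm).trans Finset.sum_comm

end CommRing

section Real

lemma dotProduct_mulVec_le_of_le {A B : Matrix ι ι ℝ} (h : A ≤ B) (x : ι → ℝ) :
    x ⬝ᵥ A *ᵥ x ≤ x ⬝ᵥ B *ᵥ x := by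
  have := (le_iff.1 h).dotProduct_mulVec_nonneg x
  rw [star_trivial, sub_mulVec, dotProduct_sub] at this
  linarith

lemma trace_transpose_mul_mul_le_of_le [Fintype κ] {A B : Matrix ι ι ℝ} (h : A ≤ B)
    (X : Matrix ι κ ℝ) : (Xᵀ * A * X).trace ≤ (Xᵀ * B * X).trace := by
  simp only [trace_transpose_mul_mul]
  exact Finset.sum_le_sum fun k _ => dotProduct_mulVec_le_of_le h _

variable [DecidableEq ι] {W : Matrix ι ι ℝ}

lemma posSemidef_one_add (hsymm : W.IsSymm) (hW : W ∈ doublyStochastic ℝ ι) :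
    (1 + W).PosSemidef := by
  refine .of_dotProduct_mulVec_nonneg ?_ fun x => ?_
  · simpa [IsHermitian, conjTranspose_eq_transpose_of_trivial] using hsymm.eq
  · have hsum : 0 ≤ ∑ i, ∑ j, W i j * (x i + x j) ^ 2 :=
      Finset.sum_nonneg fun i _ => Finset.sum_nonneg fun j _ =>
        mul_nonneg (nonneg_of_mem_doublyStochastic hW) (sq_nonneg _)
    rw [sum_sum_mul_add_sq hW] at hsum
    simpa using hsum

lemma transpose_mul_one_sub_mul_le_one_sub (hsymm : W.IsSymm) (hW : W ∈ doublyStochastic ℝ ι) :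
    Wᵀ * (1 - W) * W ≤ 1 - W := by
  have key : 1 - W - Wᵀ * (1 - W) * W = (1 - W)ᴴ * (1 + W) * (1 - W) := by
    rw [conjTranspose_eq_transpose_of_trivial, transpose_sub, transpose_one, hsymm.eq]
    noncomm_ring
  rw [le_iff, key]
  exact (posSemidef_one_add hsymm hW).conjTranspose_mul_mul_same _

end Real

end Matrix

theorem aggregation_shrinks_distance_general
    (n d : ℕ)
    (W : Matrix (Fin n) (Fin n) ℝ) (hsymm : W.IsSymm)
    (hnonneg : ∀ i j, 0 ≤ W i j) (hrow : ∀ i, ∑ j, W i j = 1)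
    (L : Matrix (Fin n) (Fin n) ℝ) (hL : L = 1 - W)
    (D : Matrix (Fin n) (Fin d) ℝ → ℝ)
    (hD : ∀ X, D X = (1 / 4) * ∑ i, ∑ j, W i j * ∑ k, (X i k - X j k) ^ 2) :
    (∀ X : Matrix (Fin n) (Fin d) ℝ, D X = (1 / 2) * (Xᵀ * L * X).trace) ∧
    (∀ X : Matrix (Fin n) (Fin d) ℝ, D (W * X) ≤ D X) ∧
    (∀ x : Fin n → ℝ, (W.mulVec x) ⬝ᵥ (L.mulVec (W.mulVec x)) ≤ x ⬝ᵥ (L.mulVec x)) := by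
  subst hL
  have hW := mem_doublyStochastic_of_isSymm hsymm hnonneg hrow
  have hD_trace : ∀ X, D X = (1 / 2) * (Xᵀ * (1 - W) * X).trace := fun X => by
    rw [hD, sum_sum_mul_sum_sub_sq hW]
    ring
  have hle := transpose_mul_one_sub_mul_le_one_sub hsymm hW
  refine ⟨hD_trace, fun X => ?_, fun x => ?_⟩
  · have hconj : (W * X)ᵀ * (1 - W) * (W * X) = Xᵀ * (Wᵀ * (1 - W) * W) * X := by
      simp only [transpose_mul, Matrix.mul_assoc]
    rw [hD_trace, hD_trace, hconj]
    linarith [trace_transpose_mul_mul_le_of_le hle X]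
  · rw [← dotProduct_transpose_mul_mul_mulVec]
    exact dotProduct_mulVec_le_of_le hle x

/-- **Theorem 4 (aggregation shrinks the embedding distance).**
For a symmetric row-stochastic nonnegative matrix `W` and `L = I − W`, one aggregation
step `H = W·X` satisfies `D(H) ≤ D(X)` where
`D(X) = (1/4)·Σ_{i,j} W i j ‖Xᵢ − Xⱼ‖² = (1/2)·trace(Xᵀ L X)`;
equivalently, `(Wx)ᵀ L (Wx) ≤ xᵀ L x` for every vector `x`. -/
theorem aggregation_shrinks_distance
    (n d : ℕ) (hn : 0 < n) (hd : 0 < d)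
    (W : Matrix (Fin n) (Fin n) ℝ) (hsymm : W.IsSymm)
    (hnonneg : ∀ i j, 0 ≤ W i j) (hrow : ∀ i, ∑ j, W i j = 1)
    (L : Matrix (Fin n) (Fin n) ℝ) (hL : L = 1 - W)
    (D : Matrix (Fin n) (Fin d) ℝ → ℝ)
    (hD : ∀ X, D X = (1 / 4) * ∑ i, ∑ j, W i j * ∑ k, (X i k - X j k) ^ 2) :
    (∀ X : Matrix (Fin n) (Fin d) ℝ, D X = (1 / 2) * (Xᵀ * L * X).trace) ∧
    (∀ X : Matrix (Fin n) (Fin d) ℝ, D (W * X) ≤ D X) ∧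
    (∀ x : Fin n → ℝ, (W.mulVec x) ⬝ᵥ (L.mulVec (W.mulVec x)) ≤ x ⬝ᵥ (L.mulVec x)) :=
  aggregation_shrinks_distance_general n d W hsymm hnonneg hrow L hL D hD
end
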